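/- arXiv:2210.07380 — 7 statements merged into one kernel-verified Lean document; each statement's English description precedes it below -/
import Mathlib

section
/- The symmetric closure of directed strong apartness coincides with strong apartness: for all states p, q in a labelled transition system, p and q are directed strongly apart (in either direction) if and only if p and q are strongly apart. -/
variable {X A : Type*}

/-- Strong apartness: least symmetric relation closed under the strong apartness rule
(formulated via the rule and its symmetric variant). -/
inductive SApart (step : A → X → X → Prop) : X → X → Prop
  | left {a : A} {p p' q : X} : step a p p' →
      (∀ q', step a q q' → SApart step p' q') → SApart step p q
  | right {a : A} {p q q' : X} : step a q q' →
      (∀ p', step a p p' → SApart step q' p') → SApart step p q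

/-- `Q` is a directed strong apartness relation. -/
def IsDSApartRel (step : A → X → X → Prop) (Q : X → X → Prop) : Prop :=
  ∀ (a : A) (p p' q : X), step a p p' →
    (∀ q', step a q q' → Q p' q' ∨ Q q' p') → Q p q

/-- Directed strong apartness: least relation closed under the directed rule;
`p` and `q` are related iff every directed strong apartness relates them. -/
def DSApart (step : A → X → X → Prop) (p q : X) : Prop :=
  ∀ Q : X → X → Prop, IsDSApartRel step Q → Q p q


lemma sApart_symm {step : A → X → X → Prop} {p q : X} (h : SApart step p q) :
    SApart step q p := by
  induction h with
  | left hs h _ => exact SApart.right hs h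
  | right hs h _ => exact SApart.left hs h

lemma sApart_isDSApartRel (step : A → X → X → Prop) :
    IsDSApartRel step (SApart step) := by
  intro a p p' q hp h
  exact SApart.left hp (fun q' hq => (h q' hq).elim id sApart_symm)

lemma sApart_to_or {step : A → X → X → Prop} {p q : X} (h : SApart step p q) :
    DSApart step p q ∨ DSApart step q p := by
  induction h with
  | left hs _ ih =>
      left
      intro Q hQ
      refine hQ _ _ _ _ hs (fun q' hq => ?_)
      rcases ih q' hq with h1 | h1
      · exact Or.inl (h1 Q hQ)
      · exact Or.inr (h1 Q hQ)
  | right hs _ ih =>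
      right
      intro Q hQ
      refine hQ _ _ _ _ hs (fun p' hp => ?_)
      rcases ih p' hp with h1 | h1
      · exact Or.inl (h1 Q hQ)
      · exact Or.inr (h1 Q hQ)

theorem dsApart_symmClosure_iff_sApart (step : A → X → X → Prop) (p q : X) :
    (DSApart step p q ∨ DSApart step q p) ↔ SApart step p q := by
  constructor
  · rintro (h | h)
    · exact h _ (sApart_isDSApartRel step)
    · exact sApart_symm (h _ (sApart_isDSApartRel step))
  · exact sApart_to_or
end

section
/- Directed strong bisimilarity is the complement of directed strong apartness: for all states p, q, p is directed strongly bisimilar to q if and only if p is not directed strongly apart from q. -/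
variable {X A : Type*}

/-- `R` is a directed strong bisimulation. -/
def IsDSBisim (step : A → X → X → Prop) (R : X → X → Prop) : Prop :=
  ∀ (a : A) (p p' q : X), R p q → step a p p' → ∃ q', step a q q' ∧ R p' q' ∧ R q' p'

/-- Directed strong bisimilarity. -/
def DSBisim (step : A → X → X → Prop) (p q : X) : Prop :=
  ∃ R : X → X → Prop, IsDSBisim step R ∧ R p q

section

variable (step : A → X → X → Prop)

theorem isDSApartRel_dsApart : IsDSApartRel step (DSApart step) :=
  fun a p p' q hstep hsucc Q hQ =>
    hQ a p p' q hstep fun q' hq' => (hsucc q' hq').imp (· Q hQ) (· Q hQ)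

theorem isDSApartRel_not_dsBisim : IsDSApartRel step fun p q => ¬ DSBisim step p q := by
  rintro a p p' q hstep hsucc ⟨R, hR, hpq⟩
  obtain ⟨q', hq', hp'q', hq'p'⟩ := hR a p p' q hpq hstep
  rcases hsucc q' hq' with hne | hne
  · exact hne ⟨R, hR, hp'q'⟩
  · exact hne ⟨R, hR, hq'p'⟩

theorem isDSBisim_not_dsApart : IsDSBisim step fun p q => ¬ DSApart step p q := by
  intro a p p' q hpq hstep
  by_contra hsucc
  refine hpq (isDSApartRel_dsApart step a p p' q hstep fun q' hq' => ?_)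
  by_contra hboth
  exact hsucc ⟨q', hq', not_or.mp hboth⟩

end

theorem dsBisim_iff_not_dsApart (step : A → X → X → Prop) (p q : X) :
    DSBisim step p q ↔ ¬ DSApart step p q :=
  ⟨fun hbisim hapart => hapart _ (isDSApartRel_not_dsBisim step) hbisim,
    fun hapart => ⟨_, isDSBisim_not_dsApart step, hapart⟩⟩
end

section
/- Branching apartness in an LTS X holds between p and q if and only if branching apartness holds between p and q in the silent-step reflexive closure of X. -/
variable {X A : Type*}

/-- The reflexive transitive closure of the silent step relation (`none` is τ). -/
def TauStar (step : Option A → X → X → Prop) : X → X → Prop :=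
  Relation.ReflTransGen (step none)

/-- `Q` is a branching apartness: a symmetric relation closed under the τ-rule
and the visible-action rule. -/
def IsBApartRel (step : Option A → X → X → Prop) (Q : X → X → Prop) : Prop :=
  (∀ p q, Q p q → Q q p) ∧
  (∀ p p' q : X, step none p p' → Q p' q →
    (∀ q' q'', TauStar step q q' → step none q' q'' → Q p q' ∨ Q p' q'') → Q p q) ∧
  (∀ (a : A) (p p' q : X), step (some a) p p' →
    (∀ q' q'', TauStar step q q' → step (some a) q' q'' → Q p q' ∨ Q p' q'') → Q p q)

/-- Branching apartness: the least branching apartness relation. -/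
def BApart (step : Option A → X → X → Prop) (p q : X) : Prop :=
  ∀ Q : X → X → Prop, IsBApartRel step Q → Q p q

/-- The silent-step reflexive closure of an LTS: add `p →_τ p` for every state `p`. -/
def reflClosure (step : Option A → X → X → Prop) : Option A → X → X → Prop :=
  fun α p q => step α p q ∨ (α = none ∧ p = q)

/-!
Apartness is the complement of branching bisimilarity, so it suffices to show that adding
τ-self-loops does not change branching bisimilarity. A bisimulation of `X` stays one of its
reflexive closure, since a self-loop `p →_τ p` is matched by letting `q` stutter. Conversely,
in the closure a step `p →_τ p'` may be answered by `q ↠_τ q' →_τ q'` with `p ~ q'` and `p' ~ q'`;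
when `q ≠ q'` the last real τ-step `c →_τ q'` answers it in `X`, by the stuttering property:
every state on a τ-path between two states bisimilar to `p` is itself bisimilar to `p`.
-/

structure IsBranchingBisim (step : Option A → X → X → Prop) (R : X → X → Prop) : Prop where
  symm : ∀ ⦃p q⦄, R p q → R q p
  transfer : ∀ ⦃p q⦄, R p q → ∀ α p', step α p p' →
    (α = none ∧ R p' q) ∨ ∃ q' q'', TauStar step q q' ∧ step α q' q'' ∧ R p q' ∧ R p' q''

def BranchingBisimilar (step : Option A → X → X → Prop) (p q : X) : Prop :=
  ∃ R, IsBranchingBisim step R ∧ R p q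

section

variable {s : Option A → X → X → Prop}

theorem IsBApartRel.isBranchingBisim_compl {Q : X → X → Prop} (hQ : IsBApartRel s Q) :
    IsBranchingBisim s fun p q => ¬ Q p q := by
  obtain ⟨hsymm, hτ, hvis⟩ := hQ
  refine ⟨fun p q hpq hqp => hpq (hsymm q p hqp), fun p q hpq α p' hstep => ?_⟩
  by_contra! hfail
  have hside : ∀ q' q'', TauStar s q q' → s α q' q'' → Q p q' ∨ Q p' q'' :=
    fun q' q'' hq' hq'' => or_iff_not_imp_left.2 (hfail.2 q' q'' hq' hq'')
  cases α with
  | none => exact hpq (hτ p p' q hstep (hfail.1 rfl) hside)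
  | some a => exact hpq (hvis a p p' q hstep hside)

theorem IsBranchingBisim.isBApartRel_compl {R : X → X → Prop} (hR : IsBranchingBisim s R) :
    IsBApartRel s fun p q => ¬ R p q := by
  have hmatch : ∀ {α p p' q}, s α p p' → R p q →
      (∀ q' q'', TauStar s q q' → s α q' q'' → ¬ R p q' ∨ ¬ R p' q'') → α = none ∧ R p' q := by
    intro α p p' q hstep hpq hside
    obtain hstutter | ⟨q', q'', hq', hq'', h, h'⟩ := hR.transfer hpq α p' hstep
    · exact hstutter
    · exact (hside q' q'' hq' hq'').elim (absurd h) (absurd h')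
  refine ⟨fun p q hpq hqp => hpq (hR.symm hqp), ?_, ?_⟩
  · exact fun p p' q hstep hp'q hside hpq => hp'q (hmatch hstep hpq hside).2
  · exact fun a p p' q hstep hside hpq => Option.some_ne_none a (hmatch hstep hpq hside).1

theorem bApart_iff_not_branchingBisimilar {p q : X} :
    BApart s p q ↔ ¬ BranchingBisimilar s p q := by
  constructor
  · rintro hapart ⟨R, hR, hpq⟩
    exact hapart _ hR.isBApartRel_compl hpq
  · intro hnot Q hQ
    by_contra hpq
    exact hnot ⟨_, hQ.isBranchingBisim_compl, hpq⟩

theorem IsBranchingBisim.exists_tauStar_of_tauStar {R : X → X → Prop} (hR : IsBranchingBisim s R)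
    {p p' q : X} (hp : TauStar s p p') (hpq : R p q) : ∃ q', TauStar s q q' ∧ R p' q' := by
  induction hp with
  | refl => exact ⟨q, .refl, hpq⟩
  | tail _ hstep ih =>
    obtain ⟨q₁, hq₁, hR₁⟩ := ih
    obtain ⟨-, h⟩ | ⟨q', q'', hq', hq'', -, h⟩ := hR.transfer hR₁ none _ hstep
    · exact ⟨q₁, hq₁, h⟩
    · exact ⟨q'', hq₁.trans (hq'.tail hq''), h⟩

theorem isBranchingBisim_branchingBisimilar : IsBranchingBisim s (BranchingBisimilar s) := by
  constructor
  · rintro p q ⟨R, hR, hpq⟩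
    exact ⟨R, hR, hR.symm hpq⟩
  · rintro p q ⟨R, hR, hpq⟩ α p' hstep
    obtain ⟨hα, h⟩ | ⟨q', q'', hq', hq'', h, h'⟩ := hR.transfer hpq α p' hstep
    · exact .inl ⟨hα, R, hR, h⟩
    · exact .inr ⟨q', q'', hq', hq'', ⟨R, hR, h⟩, ⟨R, hR, h'⟩⟩

theorem tauStar_reflClosure : TauStar (reflClosure s) = TauStar s := by
  ext p q
  constructor
  · refine fun h => Relation.reflTransGen_closed (fun x y hxy => ?_) p q h
    obtain hxy | ⟨-, rfl⟩ := hxy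
    exacts [.single hxy, .refl]
  · exact Relation.ReflTransGen.mono (fun _ _ => Or.inl) p q

theorem IsBranchingBisim.to_reflClosure {R : X → X → Prop} (hR : IsBranchingBisim s R) :
    IsBranchingBisim (reflClosure s) R := by
  refine ⟨hR.symm, fun p q hpq α p' hstep => ?_⟩
  rw [tauStar_reflClosure]
  obtain hstep | ⟨hα, rfl⟩ := hstep
  · obtain hstutter | ⟨q', q'', hq', hq'', h, h'⟩ := hR.transfer hpq α p' hstep
    exacts [.inl hstutter, .inr ⟨q', q'', hq', .inl hq'', h, h'⟩]
  · exact .inl ⟨hα, hpq⟩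

/-- In the reflexive closure the stuttering answer is redundant: the self-loop of `q` matches. -/
theorem IsBranchingBisim.exists_reflClosure {R : X → X → Prop}
    (hR : IsBranchingBisim (reflClosure s) R) {p q p' : X} {α : Option A} (hpq : R p q)
    (hstep : reflClosure s α p p') : ∃ q' q'', TauStar (reflClosure s) q q' ∧
      reflClosure s α q' q'' ∧ R p q' ∧ R p' q'' := by
  obtain ⟨hα, h⟩ | hmatch := hR.transfer hpq α p' hstep
  · exact ⟨q, q, .refl, .inr ⟨hα, rfl⟩, hpq, h⟩
  · exact hmatch

theorem branchingBisimilar_reflClosure_of_tauStar_of_tauStar {a m b u : X}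
    (ham : TauStar (reflClosure s) a m) (hmb : TauStar (reflClosure s) m b)
    (hau : BranchingBisimilar (reflClosure s) a u) (hbu : BranchingBisimilar (reflClosure s) b u) :
    BranchingBisimilar (reflClosure s) m u := by
  set B := BranchingBisimilar (reflClosure s)
  have hB : IsBranchingBisim (reflClosure s) B := isBranchingBisim_branchingBisimilar
  let Between : X → X → Prop := fun m u =>
    ∃ a b, TauStar (reflClosure s) a m ∧ TauStar (reflClosure s) m b ∧ B a u ∧ B b u
  have hB_between : ∀ {x y}, B x y → Between x y := fun h => ⟨_, _, .refl, .refl, h, h⟩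
  /- Whether `x` or `y` is the state in between, `y` τ-reaches a state bisimilar to `x`,
  from which every step of `x` is matched without stuttering. -/
  have hmatch : ∀ {x y t α x'}, TauStar (reflClosure s) y t → B x t → reflClosure s α x x' →
      ∃ q' q'', TauStar (reflClosure s) y q' ∧ reflClosure s α q' q'' ∧
        Between x q' ∧ Between x' q'' := by
    intro x y t α x' hyt hxt hstep
    obtain ⟨q', q'', hq', hq'', h, h'⟩ := hB.exists_reflClosure hxt hstep
    exact ⟨q', q'', hyt.trans hq', hq'', hB_between h, hB_between h'⟩
  have hBetween_bisim : IsBranchingBisim (reflClosure s) fun x y => Between x y ∨ Between y x := by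
    refine ⟨fun x y h => h.symm, ?_⟩
    rintro x y (⟨a, b, hax, -, hay, -⟩ | ⟨a, b, -, hyb, -, hbx⟩) α x' hstep
    · obtain ⟨t, hyt, hxt⟩ := hB.exists_tauStar_of_tauStar hax hay
      obtain ⟨q', q'', h⟩ := hmatch hyt hxt hstep
      exact .inr ⟨q', q'', h.1, h.2.1, .inl h.2.2.1, .inl h.2.2.2⟩
    · obtain ⟨q', q'', h⟩ := hmatch hyb (hB.symm hbx) hstep
      exact .inr ⟨q', q'', h.1, h.2.1, .inl h.2.2.1, .inl h.2.2.2⟩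
  exact ⟨_, hBetween_bisim, .inl ⟨a, b, ham, hmb, hau, hbu⟩⟩

theorem isBranchingBisim_branchingBisimilar_reflClosure :
    IsBranchingBisim s (BranchingBisimilar (reflClosure s)) := by
  have hB : IsBranchingBisim (reflClosure s) (BranchingBisimilar (reflClosure s)) :=
    isBranchingBisim_branchingBisimilar
  refine ⟨hB.symm, fun p q hpq α p' hstep => ?_⟩
  obtain ⟨q', q'', hq', hq'', h, h'⟩ := hB.exists_reflClosure hpq (.inl hstep)
  rw [tauStar_reflClosure] at hq'
  obtain hq'' | ⟨rfl, rfl⟩ := hq''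
  · exact .inr ⟨q', q'', hq', hq'', h, h'⟩
  obtain rfl | ⟨c, hqc, hcq'⟩ := hq'.cases_tail
  · exact .inl ⟨rfl, h'⟩
  have hcp : BranchingBisimilar (reflClosure s) c p :=
    branchingBisimilar_reflClosure_of_tauStar_of_tauStar (by rwa [tauStar_reflClosure])
      (.single (.inl hcq')) (hB.symm hpq) (hB.symm h)
  exact .inr ⟨c, q', hqc, hcq', hB.symm hcp, h'⟩

theorem branchingBisimilar_reflClosure_iff {p q : X} :
    BranchingBisimilar (reflClosure s) p q ↔ BranchingBisimilar s p q :=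
  ⟨fun h => ⟨_, isBranchingBisim_branchingBisimilar_reflClosure, h⟩,
    fun ⟨R, hR, hpq⟩ => ⟨R, hR.to_reflClosure, hpq⟩⟩

end

theorem bApart_iff_bApart_reflClosure (step : Option A → X → X → Prop) (p q : X) :
    BApart step p q ↔ BApart (reflClosure step) p q := by
  rw [bApart_iff_not_branchingBisimilar, bApart_iff_not_branchingBisimilar,
    branchingBisimilar_reflClosure_iff]
end

section
/- In an LTS with reflexive silent steps, two states p, q are branching apart if and only if their apartness can be derived using the single uniform rule (and its symmetric variant): from p →_α p' and (∀q', q'', q ↠_τ q' →_α q'' ⟹ p #_b q' ∨ p' #_b q'') conclude p #_b q, where α ranges over all actions including τ. -/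
variable {X A : Type*}

/-- `Q` is closed under the uniform branching apartness rule (with `α` ranging over
all actions, including τ) and is symmetric. -/
def IsBApartURel (step : Option A → X → X → Prop) (Q : X → X → Prop) : Prop :=
  (∀ p q, Q p q → Q q p) ∧
  (∀ (α : Option A) (p p' q : X), step α p p' →
    (∀ q' q'', TauStar step q q' → step α q' q'' → Q p q' ∨ Q p' q'') → Q p q)

/-- The least symmetric relation closed under the uniform rule. -/
def BApartU (step : Option A → X → X → Prop) (p q : X) : Prop :=
  ∀ Q : X → X → Prop, IsBApartURel step Q → Q p q

theorem bApart_iff_bApartU (step : Option A → X → X → Prop)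
    (htau : ∀ p : X, step none p p) (p q : X) :
    BApart step p q ↔ BApartU step p q := by
  constructor
  · intro h
    apply h
    refine ⟨fun p q hpq Q hQ => hQ.1 _ _ (hpq Q hQ), ?_, ?_⟩
    · intro p p' q hstep _ hcond Q hQ
      exact hQ.2 none p p' q hstep (fun q' q'' h1 h2 =>
        (hcond q' q'' h1 h2).imp (fun h => h Q hQ) (fun h => h Q hQ))
    · intro a p p' q hstep hcond Q hQ
      exact hQ.2 (some a) p p' q hstep (fun q' q'' h1 h2 =>
        (hcond q' q'' h1 h2).imp (fun h => h Q hQ) (fun h => h Q hQ))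
  · intro h
    apply h
    refine ⟨fun p q hpq Q hQ => hQ.1 _ _ (hpq Q hQ), ?_⟩
    intro α p p' q hstep hcond
    match α with
    | some a =>
      intro Q hQ
      exact hQ.2.2 a p p' q hstep (fun q' q'' h1 h2 =>
        (hcond q' q'' h1 h2).imp (fun h => h Q hQ) (fun h => h Q hQ))
    | none =>
      rcases hcond q q Relation.ReflTransGen.refl (htau q) with h1 | h1
      · exact h1
      · intro Q hQ
        exact hQ.2.1 p p' q hstep (h1 Q hQ) (fun q' q'' ha hb =>
          (hcond q' q'' ha hb).imp (fun h => h Q hQ) (fun h => h Q hQ))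
end

section
/- Directed branching bisimilarity is the complement of directed branching apartness: for all states p, q in an LTS with reflexive silent steps, p is directed branching bisimilar to q if and only if p is not directed branching apart from q. -/
variable {X A : Type*}

/-- `Q` is a directed branching apartness relation. -/
def IsDBApartRel (step : Option A → X → X → Prop) (Q : X → X → Prop) : Prop :=
  ∀ (α : Option A) (p p' q : X), step α p p' →
    (∀ q' q'', Relation.ReflTransGen (step none) q q' → step α q' q'' →
      Q p q' ∨ Q p' q'' ∨ Q q'' p') → Q p q

/-- Directed branching apartness: the least directed branching apartness relation. -/
def DBApart (step : Option A → X → X → Prop) (p q : X) : Prop :=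
  ∀ Q : X → X → Prop, IsDBApartRel step Q → Q p q

/-- `R` is a directed branching bisimulation. -/
def IsDBBisim (step : Option A → X → X → Prop) (R : X → X → Prop) : Prop :=
  ∀ (α : Option A) (p p' q : X), R p q → step α p p' →
    ∃ q' q'', TauStar step q q' ∧ step α q' q'' ∧ R p q' ∧ R p' q'' ∧ R q'' p'

/-- Directed branching bisimilarity. -/
def DBBisim (step : Option A → X → X → Prop) (p q : X) : Prop :=
  ∃ R : X → X → Prop, IsDBBisim step R ∧ R p q

/- The defining clause of an apartness relation `Q` is the contrapositive of the transfer condition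
of a bisimulation for the complement of `Q`. So complementation exchanges directed branching
apartness relations and directed branching bisimulations, and the least apartness relation is the
complement of the largest bisimulation. -/

theorem isDBBisim_compl_iff {step : Option A → X → X → Prop} {Q : X → X → Prop} :
    IsDBBisim step (fun x y => ¬ Q x y) ↔ IsDBApartRel step Q := by
  unfold IsDBBisim IsDBApartRel TauStar
  refine forall₄_congr fun α p p' q => ?_
  constructor
  · intro h hstep hall
    by_contra hpq
    obtain ⟨q', q'', hq', hq'', h₁, h₂, h₃⟩ := h hpq hstep
    exact (hall q' q'' hq' hq'').elim h₁ (Or.elim · h₂ h₃)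
  · intro h hpq hstep
    by_contra! hcon
    exact hpq <| h hstep fun q' q'' hq' hq'' => by tauto

theorem isDBApartRel_compl_iff {step : Option A → X → X → Prop} {R : X → X → Prop} :
    IsDBApartRel step (fun x y => ¬ R x y) ↔ IsDBBisim step R := by
  simpa only [not_not] using (isDBBisim_compl_iff (Q := fun x y => ¬ R x y)).symm

theorem isDBApartRel_dbApart (step : Option A → X → X → Prop) :
    IsDBApartRel step (DBApart step) :=
  fun α p p' q hstep hall Q hQ =>
    hQ α p p' q hstep fun q' q'' hq' hq'' =>
      (hall q' q'' hq' hq'').imp (· Q hQ) (Or.imp (· Q hQ) (· Q hQ))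

theorem dbBisim_iff_not_dbApart_general (step : Option A → X → X → Prop) (p q : X) :
    DBBisim step p q ↔ ¬ DBApart step p q := by
  constructor
  · rintro ⟨R, hR, hpq⟩ hap
    exact hap _ (isDBApartRel_compl_iff.2 hR) hpq
  · exact fun h => ⟨_, isDBBisim_compl_iff.2 (isDBApartRel_dbApart step), h⟩

theorem dbBisim_iff_not_dbApart (step : Option A → X → X → Prop)
    (htau : ∀ p : X, step none p p) (p q : X) :
    DBBisim step p q ↔ ¬ DBApart step p q :=
  dbBisim_iff_not_dbApart_general step p q
end

section
/- Tau-extension of directed branching apartness: in an LTS with reflexive silent steps, if p ↠_τ p', q ↠_τ q', and p' is directed branching apart from q, then p is directed branching apart from q'. -/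
variable {X A : Type*}

theorem dbApart_tau_extension (step : Option A → X → X → Prop)
    (htau : ∀ p : X, step none p p) (p p' q q' : X)
    (hp : TauStar step p p') (hq : TauStar step q q') (h : DBApart step p' q) :
    DBApart step p q' := by
  intro Q hQ
  let R : X → X → Prop := fun a b => ∀ x y, TauStar step x a → TauStar step b y → Q x y
  have hR : IsDBApartRel step R := by
    intro α a a' b hstep hyp x y hxa hby
    induction hxa using Relation.ReflTransGen.head_induction_on generalizing y with
    | refl =>
      apply hQ α a a' y hstep
      intro y' y'' hyy' hstep'
      rcases hyp y' y'' (hby.trans hyy') hstep' with h1 | h2 | h3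
      · exact Or.inl (h1 a y' Relation.ReflTransGen.refl Relation.ReflTransGen.refl)
      · exact Or.inr (Or.inl (h2 a' y'' Relation.ReflTransGen.refl Relation.ReflTransGen.refl))
      · exact Or.inr (Or.inr (h3 y'' a' Relation.ReflTransGen.refl Relation.ReflTransGen.refl))
    | head hstep1 hchain ih =>
      rename_i u v
      apply hQ none u v y hstep1
      intro y' y'' hyy' hstep'
      exact Or.inr (Or.inl (ih y'' (hby.trans (hyy'.tail hstep'))))
  exact h R hR p q' hp hq
end

section
/- Apartness stuttering: in an LTS with reflexive silent steps, if r ↠_τ p ↠_τ t and p is branching apart from q, then r is branching apart from q or t is branching apart from q. -/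
variable {X A : Type*}

theorem bApartU_symm (step : Option A → X → X → Prop) {p q : X}
    (h : BApartU step p q) : BApartU step q p :=
  fun Q hQ => hQ.1 p q (h Q hQ)

theorem bApartU_closed (step : Option A → X → X → Prop) :
    IsBApartURel step (BApartU step) := by
  constructor
  · exact fun p q h Q hQ => hQ.1 p q (h Q hQ)
  · intro α p p' q hstep hcond Q hQ
    exact hQ.2 α p p' q hstep (fun q' q'' h1 h2 =>
      (hcond q' q'' h1 h2).imp (fun h => h Q hQ) (fun h => h Q hQ))

theorem bApartU_lemC (step : Option A → X → X → Prop) {r p : X}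
    (hrp : TauStar step r p) :
    ∀ q : X, (∀ q1, TauStar step q q1 → BApartU step p q1) → BApartU step r q := by
  induction hrp using Relation.ReflTransGen.head_induction_on with
  | refl => exact fun q h => h q Relation.ReflTransGen.refl
  | head hstep _ ih =>
    intro q h
    apply (bApartU_closed step).2 none _ _ q hstep
    intro q' q'' hq' hq''
    right
    exact ih q'' (fun q1 hq1 =>
      h q1 (Relation.ReflTransGen.trans (Relation.ReflTransGen.tail hq' hq'') hq1))

theorem bApart_stuttering (step : Option A → X → X → Prop)
    (htau : ∀ p : X, step none p p) (r p t q : X)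
    (hrp : TauStar step r p) (hpt : TauStar step p t) (h : BApartU step p q) :
    BApartU step r q ∨ BApartU step t q := by
  let P : X → X → Prop := fun p q => ∀ r t, TauStar step r p → TauStar step p t →
    BApartU step r q ∨ BApartU step t q
  let Q : X → X → Prop := fun p q => P p q ∧ P q p
  have hQB : ∀ m n, Q m n → BApartU step m n := fun m n h =>
    (h.1 m m Relation.ReflTransGen.refl Relation.ReflTransGen.refl).elim id id
  have hQ : IsBApartURel step Q := by
    constructor
    · exact fun p q h => ⟨h.2, h.1⟩
    · intro α p p' q hstep H
      constructor
      · intro r t hrp hpt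
        left
        apply bApartU_lemC step hrp
        intro q1 hq1
        apply (bApartU_closed step).2 α p p' q1 hstep
        intro q2 q3 h1 h2
        exact (H q2 q3 (Relation.ReflTransGen.trans hq1 h1) h2).imp
          (hQB _ _) (hQB _ _)
      · intro r t hrq hqt
        right
        apply bApartU_symm
        apply (bApartU_closed step).2 α p p' t hstep
        intro t' t'' h1 h2
        exact (H t' t'' (Relation.ReflTransGen.trans hqt h1) h2).imp
          (hQB _ _) (hQB _ _)
  exact (h Q hQ).1 r t hrp hpt
end
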